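/- Every finitely generated non-Hopfian group fails to be residually finite; equivalently, every finitely generated residually finite group is Hopfian (Mal'cev's theorem). -/

import Mathlib

/-- A letter in the free group on two generators `a = 0`, `b = 1`:
the generator together with the exponent sign (`true` = exponent `+1`). -/
abbrev Letter := Fin 2 × Bool

/-- A word in the generators `a±1, b±1`. -/
abbrev Word := List Letter

/-- Continued fraction `[m₁,…,m_k] = 1/(m₁ + 1/(m₂ + ⋯ + 1/m_k))`. -/
def cf : List ℕ → ℚ
  | [] => 0
  | m :: rest => 1 / (m + cf rest)

/-- `ε_i = (-1)^⌊iq/p⌋`. -/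
def eps (p q i : ℕ) : ℤ := (-1) ^ (i * q / p)

/-- The word `û_{q/p} = b^{ε₁} a^{ε₂} b^{ε₃} ⋯` (of length `p-1`) as a list of letters. -/
def hatList (p q : ℕ) : Word :=
  (List.range (p - 1)).map (fun j =>
    ((if (j + 1) % 2 = 1 then (1 : Fin 2) else 0), decide ((((j + 1) * q) / p) % 2 = 0)))

/-- The formal inverse of a word. -/
def invWord (w : Word) : Word := (w.map (fun x => (x.1, !x.2))).reverse

/-- The 2-bridge relator word `u_{q/p}`: `a·û·b^{(-1)^q}·û⁻¹` for `p` odd, and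
`a·û·a⁻¹·û⁻¹` for `p` even. -/
def uList (p q : ℕ) : Word :=
  ((0 : Fin 2), true) :: (hatList p q ++
    (if p % 2 = 1 then [((1 : Fin 2), decide (q % 2 = 0))] else [((0 : Fin 2), false)]) ++
    invWord (hatList p q))

/-- The relator word `u_r` of slope `r = q/p` (in lowest terms). -/
def slopeWord (r : ℚ) : Word := uList r.den r.num.toNat

/-- The slopes `r_0 = [4,3,3]`, `r_i = [4,2,(i-1)⟨3⟩,4,3]` for `i ≥ 1`. -/
def rSlope : ℕ → ℚ
  | 0 => cf [4, 3, 3]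
  | i + 1 => cf ([4, 2] ++ List.replicate i 3 ++ [4, 3])

/-- Run-lengths of a list of signs (auxiliary). -/
def runsAux : Bool → ℕ → List Bool → List ℕ
  | _, n, [] => [n]
  | s, n, x :: xs => if x = s then runsAux s (n + 1) xs else n :: runsAux x 1 xs

/-- The S-sequence of a word: the lengths of its maximal positive/negative blocks. -/
def Sseq (w : Word) : List ℕ :=
  match w.map Prod.snd with
  | [] => []
  | s :: xs => runsAux s 1 xs

/-- A word is reduced: no adjacent mutually inverse letters. -/
def Reduced (w : Word) : Prop :=
  List.Chain' (fun u v => ¬(u.1 = v.1 ∧ u.2 ≠ v.2)) w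

/-- A word is alternating: adjacent letters use different generators. -/
def Alternating (w : Word) : Prop := List.Chain' (fun u v => u.1 ≠ v.1) w

/-- Cyclically reduced: reduced including the wrap-around pair. -/
def CyclicallyReduced (w : Word) : Prop :=
  List.Chain' (fun u v => ¬(u.1 = v.1 ∧ u.2 ≠ v.2)) (w ++ w)

/-- Cyclically alternating: alternating including the wrap-around pair. -/
def CyclicallyAlternating (w : Word) : Prop :=
  List.Chain' (fun u v => u.1 ≠ v.1) (w ++ w)

/-- The word starts at a block boundary of the cyclic word: either all signs agree,
or the first and last signs differ. -/
def StartsAtBoundary (w : Word) : Prop :=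
  (∀ x ∈ w, ∀ y ∈ w, x.2 = y.2) ∨ (∀ x ∈ w.head?, ∀ y ∈ w.getLast?, x.2 ≠ y.2)

/-- `L` is a linear representative of the cyclic S-sequence `CS(w)`:
the S-sequence of some rotation of `w` starting at a block boundary. -/
def IsCSRep (w : Word) (L : List ℕ) : Prop :=
  ∃ n, StartsAtBoundary (w.rotate n) ∧ Sseq (w.rotate n) = L

/-- From a linear representative `L = (m+1, t₁⟨m⟩, m+1, t₂⟨m⟩, …)` of a CS-sequence,
extract the CT-sequence `(t₁, t₂, …)` of run-lengths of `m`'s. -/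
def ctOf (m : ℕ) (L : List ℕ) : List ℕ := ((L.splitOn (m + 1)).drop 1).map List.length

/-- The cyclic sequence represented by `L` contains `pat` as a contiguous subsequence. -/
def CyclicContains (L pat : List ℕ) : Prop := ∃ k, pat.isPrefixOf (L.rotate k)

/-- The number of (cyclic) occurrences of `pat` as a contiguous subsequence of
the cyclic sequence represented by `L`. -/
def cyclicCount (pat L : List ℕ) : ℕ :=
  ((List.range L.length).filter (fun k => pat.isPrefixOf (L.rotate k))).length

/-- `⟨⟨S₁, S₂, S₁, S₂⟩⟩` is the symmetric decomposition of the cyclic S-sequence of `w`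
(for a slope whose continued fraction starts with `m`): each `Sᵢ` is a palindrome,
`S₁` begins and ends with `m+1`, and `S₂` begins and ends with `m`. -/
def IsSymmDecomp (w : Word) (m : ℕ) (S1 S2 : List ℕ) : Prop :=
  IsCSRep w (S1 ++ S2 ++ S1 ++ S2) ∧ S1.reverse = S1 ∧ S2.reverse = S2 ∧
  (∀ x ∈ S1.head?, x = m + 1) ∧ (∀ x ∈ S1.getLast?, x = m + 1) ∧
  S2.head? = some m ∧ S2.getLast? = some m

/-- Expand a sequence of block lengths into the corresponding list of signs,
blocks alternating in sign starting with `s`. -/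
def signList : Bool → List ℕ → List Bool
  | _, [] => []
  | s, n :: rest => List.replicate n s ++ signList (!s) rest

open Fin.NatCast in
/-- The alternating word with initial generator `g0`, initial sign `s0`,
and S-sequence `S`. -/
def altWord (g0 : Fin 2) (s0 : Bool) (S : List ℕ) : Word :=
  (List.range (signList s0 S).length).zipWith (fun (k : ℕ) s => ((g0 + (k : Fin 2)), s))
    (signList s0 S)

/-- The product `w * w'` is freely reduced without cancellation at the junction. -/
def NoCancel (w w' : Word) : Prop :=
  ∀ x ∈ w.getLast?, ∀ y ∈ w'.head?, ¬(x.1 = y.1 ∧ x.2 ≠ y.2)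

/-- The word `X`: alternating, starting with `a`, with S-sequence `(4,4,4,5,4,4)`
(it ends with `a⁻¹`). -/
def Xword : Word := altWord 0 true [4, 4, 4, 5, 4, 4]

/-- The endomorphism of `F(a,b)` with `a ↦ X⁻¹`, `b ↦ b⁻¹`. -/
def fmap : FreeGroup (Fin 2) →* FreeGroup (Fin 2) :=
  FreeGroup.lift (fun i => if i = 0 then (FreeGroup.mk Xword)⁻¹ else (FreeGroup.of 1)⁻¹)

/-- The set of relators `{u_{r_i} : i ≥ 0}`. -/
def relsG : Set (FreeGroup (Fin 2)) := {x | ∃ i, x = FreeGroup.mk (slopeWord (rSlope i))}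

/-- The symmetrized set generated by the relators `u_{r_i}`: all cyclic permutations
of the `u_{r_i}` and of their inverses. -/
def Rset : Set Word :=
  {w | ∃ i n, w = (slopeWord (rSlope i)).rotate n ∨
      w = (invWord (slopeWord (rSlope i))).rotate n}

namespace MonoidHom

variable {G H : Type*} [Group G] [Group H]

instance finite_of_fg [Group.FG G] [Finite H] : Finite (G →* H) := by
  obtain ⟨S, hS⟩ := Group.FG.out (G := G)
  refine Finite.of_injective (fun φ : G →* H => fun s : S => φ s) fun φ ψ h => ?_
  exact eq_of_eqOn_dense hS fun x hx => congrFun h ⟨x, hx⟩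

/-- Precomposition with `f` is an injective self-map of the finite set `G →* H`, hence
surjective: every `φ` factors as `ψ.comp f`. -/
theorem ker_le_ker_of_surjective [Group.FG G] [Finite H] {f : G →* G}
    (hf : Function.Surjective f) (φ : G →* H) : f.ker ≤ φ.ker := by
  have hprecomp : Function.Bijective fun ψ : G →* H => ψ.comp f :=
    Finite.injective_iff_bijective.mp fun _ _ => (cancel_right hf).mp
  obtain ⟨ψ, rfl⟩ := hprecomp.2 φ
  intro g hg
  rw [mem_ker] at hg ⊢
  rw [comp_apply, hg, map_one]

end MonoidHom

theorem Group.ResiduallyFinite.injective_of_surjective {G : Type*} [Group G] [Group.FG G]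
    [Group.ResiduallyFinite G] {f : G →* G} (hf : Function.Surjective f) :
    Function.Injective f := by
  rw [← MonoidHom.ker_eq_bot_iff, eq_bot_iff]
  intro g hg
  refine Group.eq_one_iff_forall_finiteIndexNormalSubroup g fun N => ?_
  simpa only [QuotientGroup.ker_mk', FiniteIndexNormalSubgroup.mem_toSubgroup_iff] using
    MonoidHom.ker_le_ker_of_surjective hf (QuotientGroup.mk' N.toSubgroup) hg

/-- Mal'cev: every finitely generated residually finite group is Hopfian,
equivalently a finitely generated non-Hopfian group is not residually finite. -/
theorem malcev_fg_residually_finite_hopfian (G : Type) [Group G] (hfg : Group.FG G)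
    (hrf : ∀ g : G, g ≠ 1 →
      ∃ (H : Type) (_ : Group H) (_ : Finite H) (φ : G →* H), φ g ≠ 1)
    (f : G →* G) (hsurj : Function.Surjective f) : Function.Injective f :=
  have := Group.residuallyFinite_of_forall_exists_finite_monoidHom hrf
  Group.ResiduallyFinite.injective_of_surjective hsurj
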